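/- arXiv:1301.2085 — 4 statements merged into one kernel-verified Lean document; each statement's English description precedes it below -/
import Mathlib

section
/- With T = D A as above, if y = (p, q, r) is an eigenvector of T with eigenvalue μ ≠ 0, then r = 0; moreover either q = 0 and H p = μ p, or q ≠ 0 and Hᵀ q = -μ q. -/
open Matrix

/-- With `T = D * A` as in the block construction, if `y = (p, q, r)` is an eigenvector of `T`
with eigenvalue `μ ≠ 0`, then `r = 0`, and either `q = 0` and `H p = μ p`,
or `q ≠ 0` and `Hᵀ q = -μ q`. -/
theorem stmt_2 {n : ℕ} (H B : Matrix (Fin n) (Fin n) ℝ)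
    (hB : B.IsSymm)
    (A D : Matrix ((Fin n ⊕ Fin n) ⊕ Unit) ((Fin n ⊕ Fin n) ⊕ Unit) ℝ)
    (hA : A = Matrix.fromBlocks (Matrix.fromBlocks 0 1 (-1) 0) 0 0 0)
    (hD : D = Matrix.fromBlocks (Matrix.fromBlocks B (-H) (-Hᵀ) 0) 0 0
      (Matrix.diagonal fun _ => -H.trace))
    (y : ((Fin n ⊕ Fin n) ⊕ Unit) → ℂ) (μ : ℂ) (hμ : μ ≠ 0) (hy : y ≠ 0)
    (heig : ((D * A).map (Complex.ofReal)).mulVec y = μ • y)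
    (p q : Fin n → ℂ) (r : ℂ)
    (hp : p = fun i => y (Sum.inl (Sum.inl i)))
    (hq : q = fun i => y (Sum.inl (Sum.inr i)))
    (hr : r = y (Sum.inr ())) :
    r = 0 ∧
      ((q = 0 ∧ (H.map (Complex.ofReal)).mulVec p = μ • p) ∨
        (q ≠ 0 ∧ (H.map (Complex.ofReal))ᵀ.mulVec q = (-μ) • q)) := by
  have hT : D * A = Matrix.fromBlocks (Matrix.fromBlocks H B 0 (-Hᵀ)) 0 0 0 := by
    subst hA hD
    simp [Matrix.fromBlocks_multiply]
  rw [hT] at heig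
  have key := fun i => congrFun heig i
  simp only [Matrix.mulVec, dotProduct, Matrix.map_apply, Fintype.sum_sum_type,
    Pi.smul_apply, smul_eq_mul] at key
  have k1 : ∀ i : Fin n, ∑ j, (H i j : ℂ) * p j + ∑ j, (B i j : ℂ) * q j = μ * p i := by
    intro i
    have := key (Sum.inl (Sum.inl i))
    simp [Matrix.fromBlocks, hp, hq] at this ⊢
    convert this using 2
  have k2 : ∀ i : Fin n, -∑ j, (H j i : ℂ) * q j = μ * q i := by
    intro i
    have := key (Sum.inl (Sum.inr i))
    simp [Matrix.fromBlocks, hq] at this ⊢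
    exact this
  have k3 : r = 0 := by
    have := key (Sum.inr ())
    simp [Matrix.fromBlocks, hr] at this ⊢
    exact this.resolve_left hμ
  refine ⟨k3, ?_⟩
  by_cases hq0 : q = 0
  · refine Or.inl ⟨hq0, ?_⟩
    funext i
    have := k1 i
    simp [hq0, Matrix.mulVec, dotProduct, Matrix.map_apply] at this ⊢
    exact this
  · refine Or.inr ⟨hq0, ?_⟩
    funext i
    have := k2 i
    simp [Matrix.mulVec, dotProduct, Matrix.map_apply, Matrix.transpose_apply] at this ⊢
    linear_combination -this
end

section
/- Let D be the Fokker-Planck operator Dφ = (1/2)div(B∇φ) - div(H s φ) on functions of s ∈ ℝⁿ, where B is symmetric positive semidefinite and H real. If χ is an eigenvalue of D with eigenfunction φ which is smooth, square-integrable with square-integrable gradient, and normalized ∫|φ|² ds = 1, and all boundary terms vanish in integration by parts (e.g. φ Schwartz), then Re(χ) ≤ -(1/2) tr(H). -/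
/-!
Pair the eigenvalue equation with `φ` in `L²`, so that `χ = ⟪φ, D φ⟫`. Integrating by parts,
the diffusion part becomes `-(1/2) ∑ B i j ⟪∂ᵢφ, ∂ⱼφ⟫`, whose real part is `≤ 0` because `B` is
positive semidefinite. In the drift part, multiplication by the real function `(H s)ᵢ` is
symmetric, so integrating `X = ⟪φ, (H s)ᵢ ∂ᵢφ⟫` by parts gives `X = -Hᵢᵢ ‖φ‖² - conj X`, that is
`Re X = -(1/2) Hᵢᵢ ‖φ‖²`. Altogether `Re χ ≤ -tr H + (1/2) tr H`.
-/

open Matrix MeasureTheory SchwartzMap LineDeriv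
open scoped ComplexInnerProductSpace MatrixOrder

namespace Matrix.PosSemidef

/-- Writing `B = Aᵀ A`, the sum is `∑ k, ‖∑ i, A k i • u i‖²`. -/
theorem re_sum_mul_inner_nonneg {ι 𝕜 V : Type*} [Fintype ι] [RCLike 𝕜]
    [NormedAddCommGroup V] [InnerProductSpace 𝕜 V] {B : Matrix ι ι ℝ} (hB : B.PosSemidef)
    (u : ι → V) : 0 ≤ RCLike.re (∑ i, ∑ j, (B i j : 𝕜) * inner 𝕜 (u i) (u j)) := by
  classical
  obtain ⟨A, rfl⟩ := CStarAlgebra.nonneg_iff_eq_star_mul_self.mp hB.nonneg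
  have : ∑ i, ∑ j, ((star A * A) i j : 𝕜) * inner 𝕜 (u i) (u j)
      = ∑ k, inner 𝕜 (∑ i, (A k i : 𝕜) • u i) (∑ j, (A k j : 𝕜) • u j) := by
    simp only [sum_inner]
    simp only [inner_sum, inner_smul_left, inner_smul_right, Matrix.mul_apply,
      Matrix.star_apply, star_trivial, RCLike.conj_ofReal, RCLike.ofReal_sum, RCLike.ofReal_mul,
      Finset.sum_mul]
    conv_rhs => rw [Finset.sum_comm]
    refine Finset.sum_congr rfl fun i _ => ?_
    conv_rhs => rw [Finset.sum_comm]
    exact Finset.sum_congr rfl fun j _ => Finset.sum_congr rfl fun k _ => by ring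
  rw [this, map_sum]
  exact Finset.sum_nonneg fun k _ => inner_self_nonneg

end Matrix.PosSemidef

namespace SchwartzMap

variable {E : Type*} [NormedAddCommGroup E] [NormedSpace ℝ E]

theorem lineDerivOp_smulLeftCLM {F : Type*} [NormedAddCommGroup F] [NormedSpace ℝ F]
    (ℓ : E →L[ℝ] ℝ) (f : 𝓢(E, F)) (v : E) :
    ∂_{v} (smulLeftCLM F ⇑ℓ f) = ℓ v • f + smulLeftCLM F ⇑ℓ (∂_{v} f) := by
  ext x
  have hℓ := ℓ.hasTemperateGrowth
  simp only [lineDerivOp_apply_eq_fderiv, _root_.add_apply, _root_.smul_apply,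
    smulLeftCLM_apply_apply hℓ, smulLeftCLM_apply hℓ]
  rw [fderiv_fun_smul ℓ.differentiableAt f.differentiableAt]
  simp [add_comm]

variable [FiniteDimensional ℝ E] [MeasurableSpace E] [BorelSpace E]
  {μ : Measure E} [μ.IsAddHaarMeasure]

theorem inner_toL2_lineDerivOp_right (f g : 𝓢(E, ℂ)) (v : E) :
    ⟪f.toLp 2 μ, (∂_{v} g).toLp 2 μ⟫ = -⟪(∂_{v} f).toLp 2 μ, g.toLp 2 μ⟫ := by
  simp only [inner_toL2_toL2_eq, RCLike.inner_apply']
  exact integral_bilinear_lineDerivOp_right_eq_neg_left (μ := μ) f g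
    ((ContinuousLinearMap.mul ℝ ℂ).comp Complex.conjCLE.toContinuousLinearMap) v

theorem inner_toL2_self (f : 𝓢(E, ℂ)) :
    ⟪f.toLp 2 μ, f.toLp 2 μ⟫ = ((∫ x, ‖f x‖ ^ 2 ∂μ : ℝ) : ℂ) := by
  rw [inner_toL2_toL2_eq f f μ, ← integral_complex_ofReal]
  simp [inner_self_eq_norm_sq_to_K]

theorem inner_toL2_smulLeftCLM_left {g : E → ℝ} (hg : g.HasTemperateGrowth) (f h : 𝓢(E, ℂ)) :
    ⟪(smulLeftCLM ℂ g f).toLp 2 μ, h.toLp 2 μ⟫ = ⟪f.toLp 2 μ, (smulLeftCLM ℂ g h).toLp 2 μ⟫ := by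
  simp only [inner_toL2_toL2_eq, smulLeftCLM_apply_apply hg, inner_smul_left_eq_smul,
    inner_smul_right_eq_smul]

theorem re_inner_toL2_smulLeftCLM_lineDerivOp_self (ℓ : E →L[ℝ] ℝ) (φ : 𝓢(E, ℂ)) (v : E) :
    ⟪φ.toLp 2 μ, (smulLeftCLM ℂ ⇑ℓ (∂_{v} φ)).toLp 2 μ⟫.re =
      -(1 / 2) * ℓ v * ∫ x, ‖φ x‖ ^ 2 ∂μ := by
  set X := ⟪φ.toLp 2 μ, (smulLeftCLM ℂ ⇑ℓ (∂_{v} φ)).toLp 2 μ⟫ with hXdef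
  have hX : X = -((ℓ v * ∫ x, ‖φ x‖ ^ 2 ∂μ : ℝ) : ℂ) - (starRingEnd ℂ) X := by
    calc X = ⟪(smulLeftCLM ℂ ⇑ℓ φ).toLp 2 μ, (∂_{v} φ).toLp 2 μ⟫ :=
          (inner_toL2_smulLeftCLM_left ℓ.hasTemperateGrowth _ _).symm
      _ = -⟪(ℓ v • φ + smulLeftCLM ℂ ⇑ℓ (∂_{v} φ)).toLp 2 μ, φ.toLp 2 μ⟫ := by
          rw [inner_toL2_lineDerivOp_right, lineDerivOp_smulLeftCLM]
      _ = _ := by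
          rw [← toLpCLM_apply (𝕜 := ℝ), map_add, map_smul, toLpCLM_apply, toLpCLM_apply,
            inner_add_left, inner_smul_left_eq_smul, inner_toL2_self,
            ← inner_conj_symm _ (φ.toLp 2 μ), hXdef, Complex.real_smul]
          push_cast
          ring
  have hre := congrArg Complex.re hX
  simp only [Complex.sub_re, Complex.neg_re, Complex.ofReal_re, Complex.conj_re] at hre
  linarith

end SchwartzMap

section FokkerPlanck

variable {ι : Type*} [Fintype ι]

noncomputable def Matrix.mulVecCoordCLM (H : Matrix ι ι ℝ) (i : ι) : (ι → ℝ) →L[ℝ] ℝ :=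
  (ContinuousLinearMap.proj i).comp (LinearMap.toContinuousLinearMap H.mulVecLin)

@[simp]
theorem Matrix.mulVecCoordCLM_apply (H : Matrix ι ι ℝ) (i : ι) (s : ι → ℝ) :
    H.mulVecCoordCLM i s = (H *ᵥ s) i := rfl

variable [DecidableEq ι]

/-- `-div (H s φ)` is expanded as `-(tr H) φ - ∑ i, (H s)ᵢ ∂ᵢφ`. -/
noncomputable def fokkerPlanck (B H : Matrix ι ι ℝ) (φ : 𝓢(ι → ℝ, ℂ)) : 𝓢(ι → ℝ, ℂ) :=
  (1 / 2 : ℂ) • ∑ i, ∑ j, (B i j : ℂ) • ∂_{(Pi.single i 1 : ι → ℝ)} (∂_{(Pi.single j 1 : ι → ℝ)} φ)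
    - (H.trace : ℂ) • φ - ∑ i, smulLeftCLM ℂ ⇑(H.mulVecCoordCLM i) (∂_{(Pi.single i 1 : ι → ℝ)} φ)

theorem fokkerPlanck_apply (B H : Matrix ι ι ℝ) (φ : 𝓢(ι → ℝ, ℂ)) (s : ι → ℝ) :
    fokkerPlanck B H φ s =
      (1 / 2 : ℂ) * ∑ i, ∑ j, (B i j : ℂ) *
          fderiv ℝ (fun t => fderiv ℝ (⇑φ) t (Pi.single j 1)) s (Pi.single i 1)
        - (H.trace : ℂ) * φ s
        - ∑ i, (H.mulVec s i : ℂ) * fderiv ℝ (⇑φ) s (Pi.single i 1) := by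
  simp only [fokkerPlanck, _root_.sub_apply, _root_.smul_apply, _root_.sum_apply, smul_eq_mul,
    smulLeftCLM_apply_apply (H.mulVecCoordCLM _).hasTemperateGrowth, mulVecCoordCLM_apply,
    Complex.real_smul]
  rfl

variable {μ : Measure (ι → ℝ)} [μ.IsAddHaarMeasure]

theorem re_inner_toL2_fokkerPlanck_le {B : Matrix ι ι ℝ} (hB : B.PosSemidef)
    (H : Matrix ι ι ℝ) (φ : 𝓢(ι → ℝ, ℂ)) :
    ⟪φ.toLp 2 μ, (fokkerPlanck B H φ).toLp 2 μ⟫.re ≤ -(1 / 2) * H.trace * ∫ x, ‖φ x‖ ^ 2 ∂μ := by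
  set N := ∫ x, ‖φ x‖ ^ 2 ∂μ
  let u (i : ι) : Lp ℂ 2 μ := (∂_{(Pi.single i 1 : ι → ℝ)} φ).toLp 2 μ
  let drift (i : ι) : 𝓢(ι → ℝ, ℂ) :=
    smulLeftCLM ℂ ⇑(H.mulVecCoordCLM i) (∂_{(Pi.single i 1 : ι → ℝ)} φ)
  have expand : ⟪φ.toLp 2 μ, (fokkerPlanck B H φ).toLp 2 μ⟫ =
      ((-(1 / 2) : ℝ) : ℂ) * ∑ i, ∑ j, (B i j : ℂ) * ⟪u i, u j⟫ - (H.trace * N : ℝ)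
        - ∑ i, ⟪φ.toLp 2 μ, (drift i).toLp 2 μ⟫ := by
    simp only [fokkerPlanck, ← toLpCLM_apply (𝕜 := ℂ), map_sub, map_sum, map_smul,
      inner_sub_right, inner_sum, inner_smul_right]
    simp only [toLpCLM_apply, inner_toL2_lineDerivOp_right φ, inner_toL2_self]
    simp only [mul_neg, Finset.sum_neg_distrib]
    push_cast
    ring
  have dissipation : 0 ≤ (∑ i, ∑ j, (B i j : ℂ) * ⟪u i, u j⟫).re :=
    hB.re_sum_mul_inner_nonneg (𝕜 := ℂ) u
  have re_drift (i : ι) : ⟪φ.toLp 2 μ, (drift i).toLp 2 μ⟫.re = -(1 / 2) * H i i * N := by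
    rw [re_inner_toL2_smulLeftCLM_lineDerivOp_self, mulVecCoordCLM_apply, mulVec_single_one]
    rfl
  have trace_eq : ∑ i, H i i = H.trace := rfl
  rw [expand, Complex.sub_re, Complex.sub_re, Complex.re_sum, Complex.ofReal_re,
    Complex.re_ofReal_mul]
  simp only [re_drift]
  rw [← Finset.sum_mul, ← Finset.mul_sum, trace_eq]
  linarith

end FokkerPlanck

/-- Let `D φ = (1/2) div(B ∇φ) - div(H s φ)` be the Fokker–Planck operator, with `B` real
symmetric positive semidefinite and `H` real. If `φ` is a Schwartz eigenfunction of `D`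
with eigenvalue `χ`, normalized so that `∫ |φ|² = 1`, then `Re χ ≤ -(1/2) tr H`. -/
theorem stmt_12 {n : ℕ} (B H : Matrix (Fin n) (Fin n) ℝ)
    (hB : B.PosSemidef)
    (φ : SchwartzMap (Fin n → ℝ) ℂ) (χ : ℂ)
    (Dφ : (Fin n → ℝ) → ℂ)
    (hDφ : Dφ = fun s =>
      (1 / 2 : ℂ) * ∑ i, ∑ j, (B i j : ℂ) *
          fderiv ℝ (fun t => fderiv ℝ (⇑φ) t (Pi.single j 1)) s (Pi.single i 1)
        - (H.trace : ℂ) * φ s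
        - ∑ i, (H.mulVec s i : ℂ) * fderiv ℝ (⇑φ) s (Pi.single i 1))
    (heig : ∀ s, Dφ s = χ * φ s)
    (hnorm : ∫ s : Fin n → ℝ, ‖φ s‖ ^ 2 = 1) :
    χ.re ≤ -(1 / 2) * H.trace := by
  have eigen : fokkerPlanck B H φ = χ • φ := by
    ext s
    rw [fokkerPlanck_apply, _root_.smul_apply, smul_eq_mul, ← heig, hDφ]
  have toLp_eigen : (fokkerPlanck B H φ).toLp 2 = χ • φ.toLp 2 := by
    rw [eigen]
    exact map_smul (toLpCLM ℂ ℂ 2 volume) χ φ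
  have h := re_inner_toL2_fokkerPlanck_le (μ := volume) hB H φ
  rw [toLp_eigen, inner_smul_right, inner_toL2_self, hnorm] at h
  simpa using h
end

section
/- Let H be Hurwitz with simple eigenvalues -μ_l (Re μ_l > 0), B symmetric positive semidefinite, a ∈ ℝⁿ, and α_l, β_l defined by α = Uᵀa and β_k = -Σ_m ᾱ_m ⟨v_k, B v_m⟩/(μ̄_m + μ_k). Then for z ∈ ℂ with Re(μ_l + z) > 0 for all l, the scalar ⟨a, G(z) a⟩ with G(z) = -Σ⁻¹(Hᵀ - zI)^{-1} equals -Σ_{l=1}^{n} α_l β_l / (μ_l + z), where Σ⁻¹ solves HΣ⁻¹ + Σ⁻¹Hᵀ = -B. -/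
open Matrix

private lemma star_dot {n : ℕ} (x y : Fin n → ℂ) : star (x ⬝ᵥ y) = star x ⬝ᵥ star y := by
  simp only [dotProduct, Pi.star_apply]
  rw [star_sum]
  exact Finset.sum_congr rfl fun i _ => star_mul' _ _

private lemma real_map_mulVec_star {n : ℕ} (A : Matrix (Fin n) (Fin n) ℝ) (x : Fin n → ℂ) :
    (A.map Complex.ofReal).mulVec (star x) = star ((A.map Complex.ofReal).mulVec x) := by
  funext i
  simp only [Matrix.mulVec, dotProduct, Matrix.map_apply, Pi.star_apply]
  rw [star_sum]
  refine Finset.sum_congr rfl fun j _ => ?_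
  rw [star_mul', RCLike.star_def, Complex.conj_ofReal]

private lemma mulVec_sum' {n : ℕ} (A : Matrix (Fin n) (Fin n) ℂ) (f : Fin n → (Fin n → ℂ)) :
    A.mulVec (∑ l, f l) = ∑ l, A.mulVec (f l) := by
  simp only [← Matrix.mulVecLin_apply, map_sum]

private lemma dot_sum_right {n : ℕ} (x : Fin n → ℂ) (f : Fin n → (Fin n → ℂ)) :
    x ⬝ᵥ (∑ l, f l) = ∑ l, x ⬝ᵥ f l := by
  simp only [dotProduct, Finset.sum_apply, Finset.mul_sum]
  exact Finset.sum_comm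

private lemma sum_dot_left {n : ℕ} (x : Fin n → ℂ) (f : Fin n → (Fin n → ℂ)) :
    (∑ l, f l) ⬝ᵥ x = ∑ l, f l ⬝ᵥ x := by
  simp only [dotProduct, Finset.sum_apply, Finset.sum_mul]
  exact Finset.sum_comm

private lemma star_ofReal_vec {n : ℕ} (a : Fin n → ℝ) :
    star (fun i => (a i : ℂ)) = fun i => (a i : ℂ) := by
  funext i
  simp [RCLike.star_def, Complex.conj_ofReal]

/-- Let `H` be Hurwitz with simple eigenvalues `-μₗ` (`Re μₗ > 0`), eigenvectors `uₗ` and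
biorthonormal adjoint eigenvectors `vₗ`, `B` symmetric positive semidefinite, `a ∈ ℝⁿ`,
`αₗ = (Uᵀ a)ₗ`, `βₖ = -Σₘ ᾱₘ ⟨vₖ, B vₘ⟩/(μ̄ₘ + μₖ)`, and let `Σ⁻¹` solve
`H Σ⁻¹ + Σ⁻¹ Hᵀ = -B`. Then for `z` with `Re(μₗ + z) > 0` for all `l`, with
`G(z) = -Σ⁻¹ (Hᵀ - z I)⁻¹` we have `⟨a, G(z) a⟩ = -Σₗ αₗ βₗ / (μₗ + z)`. -/
theorem stmt_17 {n : ℕ} (H B Sinv : Matrix (Fin n) (Fin n) ℝ)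
    (hB : B.PosSemidef)
    (μ : Fin n → ℂ) (hμre : ∀ l, 0 < (μ l).re) (hμinj : Function.Injective μ)
    (u v : Fin n → (Fin n → ℂ))
    (hu : ∀ l, (H.map Complex.ofReal).mulVec (u l) = (-μ l) • u l)
    (hv : ∀ l, (H.map Complex.ofReal)ᵀ.mulVec (v l) = (-(starRingEnd ℂ) (μ l)) • v l)
    (hbiorth : ∀ j k, star (v j) ⬝ᵥ u k = if j = k then (1 : ℂ) else 0)
    (hS : H * Sinv + Sinv * Hᵀ = -B)
    (a : Fin n → ℝ) (α β : Fin n → ℂ)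
    (hα : ∀ l, α l = u l ⬝ᵥ fun i => (a i : ℂ))
    (hβ : ∀ k, β k = -∑ m, (starRingEnd ℂ) (α m) *
      (star (v k) ⬝ᵥ (B.map Complex.ofReal).mulVec (v m)) /
        ((starRingEnd ℂ) (μ m) + μ k))
    (z : ℂ) (hz : ∀ l, 0 < (μ l + z).re)
    (G : Matrix (Fin n) (Fin n) ℂ)
    (hG : G = -(Sinv.map Complex.ofReal) * ((H.map Complex.ofReal)ᵀ - z • 1)⁻¹) :
    (fun i => (a i : ℂ)) ⬝ᵥ G.mulVec (fun i => (a i : ℂ)) =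
      -∑ l, α l * β l / (μ l + z) := by
  have hne1 : ∀ l, μ l + z ≠ 0 := by
    intro l h
    have := hz l
    rw [h] at this
    simp at this
  have hne2 : ∀ l m, μ l + (starRingEnd ℂ) (μ m) ≠ 0 := by
    intro l m h
    have h1 := hμre l
    have h2 := hμre m
    have h3 : (μ l + (starRingEnd ℂ) (μ m)).re = (μ l).re + (μ m).re := by
      simp [Complex.add_re]
    rw [h] at h3
    simp at h3
    linarith
  -- conjugate eigenvector relation
  have hw : ∀ l, (H.map Complex.ofReal)ᵀ.mulVec (star (v l)) = (-μ l) • star (v l) := by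
    intro l
    have h1 := real_map_mulVec_star Hᵀ (v l)
    rw [Matrix.transpose_map] at h1
    rw [h1, hv l]
    funext i
    simp only [Pi.star_apply, Pi.smul_apply, smul_eq_mul, star_mul', star_neg,
      starRingEnd_apply, star_star]
  -- biorthogonality as matrix identities
  set P : Matrix (Fin n) (Fin n) ℂ := Matrix.of (fun l i => u l i) with hPdef
  set Q : Matrix (Fin n) (Fin n) ℂ := Matrix.of (fun i l => star (v l i)) with hQdef
  have hPQ : P * Q = 1 := by
    ext j k
    have h := hbiorth k j
    simp only [dotProduct, Pi.star_apply] at h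
    simp only [hPdef, hQdef, Matrix.mul_apply, Matrix.of_apply, Matrix.one_apply]
    rw [show (∑ i, u j i * star (v k i)) = ∑ i, star (v k i) * u j i from
      Finset.sum_congr rfl fun i _ => mul_comm _ _, h]
    by_cases hjk : j = k
    · simp [hjk]
    · rw [if_neg (Ne.symm hjk), if_neg hjk]
  have hQP : Q * P = 1 := mul_eq_one_comm.mp hPQ
  -- expansion of a in the star (v l) basis
  have hexp : (fun i => (a i : ℂ)) = ∑ l, α l • star (v l) := by
    have h1 : Q.mulVec (P.mulVec (fun i => (a i : ℂ))) = (fun i => (a i : ℂ)) := by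
      rw [Matrix.mulVec_mulVec, hQP, Matrix.one_mulVec]
    funext i
    rw [← congrFun h1 i]
    simp only [Matrix.mulVec, dotProduct, hPdef, hQdef, Matrix.of_apply,
      Finset.sum_apply, Pi.smul_apply, Pi.star_apply, smul_eq_mul]
    refine Finset.sum_congr rfl fun l _ => ?_
    rw [hα l]
    simp only [dotProduct]
    ring
  -- the resolvent matrix
  set M : Matrix (Fin n) (Fin n) ℂ := (H.map Complex.ofReal)ᵀ - z • 1 with hMdef
  have hMw : ∀ l, M.mulVec (star (v l)) = (-(μ l + z)) • star (v l) := by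
    intro l
    rw [hMdef, Matrix.sub_mulVec, hw l, Matrix.smul_mulVec, Matrix.one_mulVec]
    funext i
    simp only [Pi.sub_apply, Pi.smul_apply, smul_eq_mul]
    ring
  set s : Fin n → ℂ := ∑ l, (-(μ l + z)⁻¹ * α l) • star (v l) with hsdef
  have hMs : M.mulVec s = (fun i => (a i : ℂ)) := by
    rw [hsdef, mulVec_sum', hexp]
    refine Finset.sum_congr rfl fun l _ => ?_
    rw [Matrix.mulVec_smul, hMw l]
    funext i
    simp only [Pi.smul_apply, smul_eq_mul]
    have := hne1 l
    field_simp
  -- invertibility of M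
  have hMQ : M * Q = Q * Matrix.diagonal (fun l => -(μ l + z)) := by
    ext i l
    rw [Matrix.mul_diagonal]
    have h := congrFun (hMw l) i
    simp only [Matrix.mulVec, dotProduct, Pi.star_apply, Pi.smul_apply, smul_eq_mul] at h
    simp only [hQdef, Matrix.mul_apply, Matrix.of_apply, Pi.star_apply]
    rw [h]
    ring
  have hdetQ : Q.det ≠ 0 := by
    have : Q.det * P.det = 1 := by rw [← Matrix.det_mul, hQP, Matrix.det_one]
    intro h0
    rw [h0, zero_mul] at this
    exact zero_ne_one this
  have hdetM : IsUnit M.det := by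
    have h1 : M.det * Q.det = Q.det * (Matrix.diagonal fun l => -(μ l + z)).det := by
      rw [← Matrix.det_mul, ← Matrix.det_mul, hMQ]
    rw [mul_comm Q.det] at h1
    have h2 : M.det = (Matrix.diagonal fun l => -(μ l + z)).det :=
      mul_right_cancel₀ hdetQ h1
    rw [h2, Matrix.det_diagonal]
    rw [isUnit_iff_ne_zero]
    exact Finset.prod_ne_zero_iff.mpr fun l _ => neg_ne_zero.mpr (hne1 l)
  have hinv : M⁻¹.mulVec (fun i => (a i : ℂ)) = s := by
    rw [← hMs, Matrix.mulVec_mulVec, Matrix.nonsing_inv_mul M hdetM, Matrix.one_mulVec]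
  -- complexified Lyapunov equation
  have hS' : (H.map Complex.ofReal) * (Sinv.map Complex.ofReal) +
      (Sinv.map Complex.ofReal) * (H.map Complex.ofReal)ᵀ = -(B.map Complex.ofReal) := by
    ext i j
    have h2 := congrFun (congrFun hS i) j
    simp only [Matrix.add_apply, Matrix.mul_apply, Matrix.neg_apply,
      Matrix.transpose_apply] at h2
    simp only [Matrix.add_apply, Matrix.mul_apply, Matrix.neg_apply,
      Matrix.transpose_apply, Matrix.map_apply]
    exact_mod_cast h2
  -- the key Lyapunov dot product identity
  have hc : ∀ l m, star (v l) ⬝ᵥ (Sinv.map Complex.ofReal).mulVec (v m)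
      = (star (v l) ⬝ᵥ (B.map Complex.ofReal).mulVec (v m)) / (μ l + (starRingEnd ℂ) (μ m)) := by
    intro l m
    have t1 : star (v l) ⬝ᵥ ((H.map Complex.ofReal) * (Sinv.map Complex.ofReal)).mulVec (v m)
        = (-μ l) * (star (v l) ⬝ᵥ (Sinv.map Complex.ofReal).mulVec (v m)) := by
      rw [← Matrix.mulVec_mulVec, Matrix.dotProduct_mulVec, ← Matrix.mulVec_transpose,
        hw l, smul_dotProduct, smul_eq_mul]
    have t2 : star (v l) ⬝ᵥ ((Sinv.map Complex.ofReal) * (H.map Complex.ofReal)ᵀ).mulVec (v m)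
        = (-(starRingEnd ℂ) (μ m)) * (star (v l) ⬝ᵥ (Sinv.map Complex.ofReal).mulVec (v m)) := by
      rw [← Matrix.mulVec_mulVec, hv m, Matrix.mulVec_smul, dotProduct_smul, smul_eq_mul]
    have h1 : star (v l) ⬝ᵥ ((H.map Complex.ofReal) * (Sinv.map Complex.ofReal) +
        (Sinv.map Complex.ofReal) * (H.map Complex.ofReal)ᵀ).mulVec (v m)
        = star (v l) ⬝ᵥ (-(B.map Complex.ofReal)).mulVec (v m) := by rw [hS']
    rw [Matrix.add_mulVec, dotProduct_add, t1, t2, Matrix.neg_mulVec,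
      dotProduct_neg] at h1
    rw [eq_div_iff (hne2 l m)]
    linear_combination -h1
  -- symmetry of B gives Hermitian structure
  have hBsymm : Bᵀ = B := by
    ext i j
    have := congrFun (congrFun hB.1 i) j
    simpa [Matrix.conjTranspose_apply] using this
  have hcherm : ∀ l m, star (star (v l) ⬝ᵥ (B.map Complex.ofReal).mulVec (v m))
      = star (v m) ⬝ᵥ (B.map Complex.ofReal).mulVec (v l) := by
    intro l m
    rw [star_dot, star_star, ← real_map_mulVec_star, Matrix.dotProduct_mulVec,
      ← Matrix.mulVec_transpose]
    have hBT : (B.map Complex.ofReal)ᵀ = B.map Complex.ofReal := by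
      rw [← Matrix.transpose_map, hBsymm]
    rw [hBT, dotProduct_comm]
  -- the T-form dot products
  have hT : ∀ l, (fun i => (a i : ℂ)) ⬝ᵥ (Sinv.map Complex.ofReal).mulVec (star (v l))
      = -β l := by
    intro l
    have hA : (fun i => (a i : ℂ)) ⬝ᵥ (Sinv.map Complex.ofReal).mulVec (star (v l))
        = star ((fun i => (a i : ℂ)) ⬝ᵥ (Sinv.map Complex.ofReal).mulVec (v l)) := by
      rw [real_map_mulVec_star, star_dot, star_ofReal_vec]
    have hBstep : (fun i => (a i : ℂ)) ⬝ᵥ (Sinv.map Complex.ofReal).mulVec (v l)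
        = ∑ k, α k * ((star (v k) ⬝ᵥ (B.map Complex.ofReal).mulVec (v l))
            / (μ k + (starRingEnd ℂ) (μ l))) := by
      rw [hexp, sum_dot_left]
      refine Finset.sum_congr rfl fun k _ => ?_
      rw [smul_dotProduct, smul_eq_mul, hc k l]
    rw [hA, hBstep, hβ l, neg_neg, star_sum]
    simp only [starRingEnd_apply]
    refine Finset.sum_congr rfl fun m _ => ?_
    rw [star_mul', star_div₀, star_add, star_star, hcherm m l, mul_div_assoc]
  -- final assembly
  rw [hG, Matrix.neg_mul, Matrix.neg_mulVec, ← Matrix.mulVec_mulVec, hinv,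
    dotProduct_neg, hsdef, mulVec_sum', dot_sum_right, neg_inj]
  refine Finset.sum_congr rfl fun l _ => ?_
  rw [Matrix.mulVec_smul, dotProduct_smul, smul_eq_mul, hT l]
  have := hne1 l
  field_simp
end

section
/- Consider the deterministic second-moment system for the Mathieu equation: Γ₀ = [[0,2,0],[-ω₀²,-γ,1],[0,-2ω₀²,-2γ]] with 0 < γ and γ² < 4ω₀². Then the eigenvalues of Γ₀ are -γ and -γ ± i√(4ω₀² - γ²); in particular all eigenvalues of Γ₀ have real part equal to -γ. -/
open Matrix

/-- For the second-moment matrix `Γ₀ = [[0,2,0],[-ω₀²,-γ,1],[0,-2ω₀²,-2γ]]` of the damped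
Mathieu equation, with `0 < γ` and `γ² < 4ω₀²`, the eigenvalues of `Γ₀` are `-γ` and
`-γ ± i√(4ω₀² - γ²)`; in particular every eigenvalue has real part `-γ`. -/
theorem stmt_19 (γ ω₀ : ℝ) (hγ : 0 < γ) (hdisc : γ ^ 2 < 4 * ω₀ ^ 2)
    (Γ₀ : Matrix (Fin 3) (Fin 3) ℝ)
    (hΓ₀ : Γ₀ = !![0, 2, 0; -ω₀ ^ 2, -γ, 1; 0, -2 * ω₀ ^ 2, -2 * γ]) :
    spectrum ℂ (Γ₀.map Complex.ofReal) =
        {(-γ : ℂ), (-γ : ℂ) + Real.sqrt (4 * ω₀ ^ 2 - γ ^ 2) * Complex.I,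
          (-γ : ℂ) - Real.sqrt (4 * ω₀ ^ 2 - γ ^ 2) * Complex.I} ∧
      ∀ z ∈ spectrum ℂ (Γ₀.map Complex.ofReal), z.re = -γ := by
  subst hΓ₀
  set s : ℝ := Real.sqrt (4 * ω₀ ^ 2 - γ ^ 2) with hs
  have hs2 : (s:ℂ)^2 = (4 * ω₀ ^ 2 - γ ^ 2 : ℝ) := by
    norm_cast
    exact Real.sq_sqrt (by linarith)
  have key : ∀ z : ℂ, z ∈ spectrum ℂ ((!![0, 2, 0; -ω₀ ^ 2, -γ, 1; 0, -2 * ω₀ ^ 2, -2 * γ] : Matrix (Fin 3) (Fin 3) ℝ).map Complex.ofReal) ↔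
      (z + γ) * ((z + γ - s * Complex.I) * (z + γ + s * Complex.I)) = 0 := by
    intro z
    rw [spectrum.mem_iff, Matrix.isUnit_iff_isUnit_det]
    rw [isUnit_iff_ne_zero, not_not]
    have hdet : ((algebraMap ℂ (Matrix (Fin 3) (Fin 3) ℂ)) z - (!![0, 2, 0; -ω₀ ^ 2, -γ, 1; 0, -2 * ω₀ ^ 2, -2 * γ] : Matrix (Fin 3) (Fin 3) ℝ).map Complex.ofReal).det
        = (z + γ) * ((z + γ - s * Complex.I) * (z + γ + s * Complex.I)) := by
      rw [Matrix.algebraMap_eq_diagonal]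
      simp [Matrix.det_fin_three, Matrix.map_apply, Matrix.diagonal]
      have h2 : (s:ℂ)^2 * Complex.I^2 = -(4 * (ω₀:ℂ) ^ 2 - (γ:ℂ) ^ 2) := by
        rw [Complex.I_sq, hs2]; push_cast; ring
      linear_combination (z + (γ:ℂ)) * h2
    rw [hdet]
  have hset : spectrum ℂ ((!![0, 2, 0; -ω₀ ^ 2, -γ, 1; 0, -2 * ω₀ ^ 2, -2 * γ] : Matrix (Fin 3) (Fin 3) ℝ).map Complex.ofReal) =
      ({(-γ : ℂ), (-γ : ℂ) + s * Complex.I, (-γ : ℂ) - s * Complex.I} : Set ℂ) := by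
    ext z
    rw [key z]
    simp only [Set.mem_insert_iff, Set.mem_singleton_iff, mul_eq_zero]
    constructor
    · rintro (h | h | h)
      · left; linear_combination h
      · right; left; linear_combination h
      · right; right; linear_combination h
    · rintro (h | h | h)
      · left; rw [h]; ring
      · right; left; rw [h]; ring
      · right; right; rw [h]; ring
  refine ⟨hset, ?_⟩
  intro z hz
  rw [hset] at hz
  rcases hz with h | h | h <;> subst h <;>
    simp [Complex.add_re, Complex.sub_re, Complex.mul_re]
end
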